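/- arXiv:2502.01447 — 2 statements merged into one kernel-verified Lean document; each statement's English description precedes it below -/
import Mathlib

section
/- Let l ≥ 1 be a natural number and set N = 4l+3. In Λ(ℂ^N), define Ω := e_1∧…∧e_{2l} + e_{2l+1}∧…∧e_{4l}. Then for every element z of the subalgebra of Λ(ℂ^N) generated by e_1, …, e_{4l}, and every σ in the linear span of { e_i∧e_j : 1 ≤ i < j ≤ 4l }, one has (Ω∧e_{4l+3}) ∧ ( z∧e_{4l+3} + Ω∧(e_{4l+1}∧e_{4l+2} + σ) ) = 2·e_1∧…∧e_{4l+3}; in particular this product is nonzero. -/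
/-- The 1-based `i`-th standard basis vector of `ℂ^N`, viewed inside the
exterior algebra `Λ(ℂ^N)` via the canonical inclusion `ι`. -/
noncomputable def e (N : ℕ) (i : ℕ) : ExteriorAlgebra ℂ (Fin N → ℂ) :=
  ExteriorAlgebra.ι ℂ (fun k : Fin N => if (k : ℕ) + 1 = i then (1 : ℂ) else 0)

/-- The wedge product `e_a ∧ e_{a+1} ∧ … ∧ e_{a+n−1}` in `Λ(ℂ^N)`. -/
noncomputable def wedgeSeq (N a n : ℕ) : ExteriorAlgebra ℂ (Fin N → ℂ) :=
  ((List.range' a n).map (e N)).prod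

/-!
Write `Ω = A + B` with `A = e₁∧…∧e_{2l}` and `B = e_{2l+1}∧…∧e_{4l}`. Both have even degree, hence
are central, and `A∧A = B∧B = 0`, so `Ω∧Ω = 2·e₁∧…∧e_{4l}`. As `e_{4l+3}` commutes with `Ω` and
`e_{4l+3}∧z∧e_{4l+3} = 0` for every `z`, the product collapses to
`Ω∧Ω∧e_{4l+3}∧(e_{4l+1}∧e_{4l+2} + σ)`. Each term of `σ` contains some `e_i` with `i ≤ 4l`, which
`e₁∧…∧e_{4l}` kills, leaving `2·e₁∧…∧e_{4l+3}`. This is nonzero because the determinant, extended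
to `Λ(ℂ^N)` as an alternating map, takes the value `1` on `e₁∧…∧e_N`.
-/

namespace ExteriorAlgebra

variable {R M : Type*} [CommRing R] [AddCommGroup M] [Module R M]

open CliffordAlgebra (involute involute_ι involute_involute)

theorem ι_mul_eq_involute_mul_ι (v : M) (x : ExteriorAlgebra R M) :
    ι R v * x = involute x * ι R v := by
  induction x using ExteriorAlgebra.induction with
  | algebraMap r => rw [AlgHom.commutes, Algebra.commutes]
  | ι w => rw [involute_ι, neg_mul, eq_neg_iff_add_eq_zero, ι_add_mul_swap]
  | mul x y hx hy => rw [map_mul, ← mul_assoc, hx, mul_assoc, hy, ← mul_assoc]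
  | add x y hx hy => rw [map_add, mul_add, hx, hy, add_mul]

theorem ι_mul_mul_ι_self (v : M) (x : ExteriorAlgebra R M) : ι R v * x * ι R v = 0 := by
  rw [ι_mul_eq_involute_mul_ι, mul_assoc, ι_sq_zero, mul_zero]

theorem commute_ι_ι_mul_ι (u v w : M) : Commute (ι R u) (ι R v * ι R w) := by
  rw [Commute, SemiconjBy, ι_mul_eq_involute_mul_ι, map_mul, involute_ι, involute_ι, neg_mul_neg]

theorem prod_map_ι_mul (L : List M) (x : ExteriorAlgebra R M) :
    (L.map (ι R)).prod * x =
      (if Even L.length then x else involute x) * (L.map (ι R)).prod := by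
  induction L generalizing x with
  | nil => simp
  | cons v L ih =>
    rw [List.map_cons, List.prod_cons, mul_assoc, ih, ← mul_assoc, ι_mul_eq_involute_mul_ι,
      mul_assoc, List.length_cons]
    by_cases h : Even L.length <;> simp [h, Nat.even_add_one, involute_involute]

theorem commute_prod_map_ι_of_even {L : List M} (hL : Even L.length) (x : ExteriorAlgebra R M) :
    Commute (L.map (ι R)).prod x := by
  rw [Commute, SemiconjBy, prod_map_ι_mul, if_pos hL]

theorem ι_mul_prod_map_ι_eq_zero {v : M} {L : List M} (hv : v ∈ L) :
    ι R v * (L.map (ι R)).prod = 0 := by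
  obtain ⟨s, t, rfl⟩ := List.append_of_mem hv
  rw [List.map_append, List.prod_append, List.map_cons, List.prod_cons, ← mul_assoc,
    ← mul_assoc, ι_mul_mul_ι_self, zero_mul]

theorem prod_map_ι_mul_eq_zero {v : M} {L : List M} (hv : v ∈ L) {x : ExteriorAlgebra R M}
    (hx : ι R v * x = 0) : (L.map (ι R)).prod * x = 0 := by
  obtain ⟨s, t, rfl⟩ := List.append_of_mem hv
  rw [List.map_append, List.prod_append, List.map_cons, List.prod_cons,
    ι_mul_eq_involute_mul_ι v, mul_assoc, mul_assoc, hx, mul_zero, mul_zero]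

theorem ιMulti_basis_ne_zero [Nontrivial R] {n : ℕ} (b : Module.Basis (Fin n) R M) :
    ιMulti R n b ≠ 0 := by
  intro h
  have := congrArg (liftAlternating (Pi.single (M := fun i => M [⋀^Fin i]→ₗ[R] R) n b.det)) h
  rw [liftAlternating_apply_ιMulti, Pi.single_eq_same, Module.Basis.det_self, map_zero] at this
  exact one_ne_zero this

end ExteriorAlgebra

section StandardBasis

open ExteriorAlgebra

variable {N : ℕ}

def stdVec (N i : ℕ) : Fin N → ℂ := fun k => if (k : ℕ) + 1 = i then 1 else 0

theorem wedgeSeq_eq_prod_map_ι (N a n : ℕ) :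
    wedgeSeq N a n = (((List.range' a n).map (stdVec N)).map (ι ℂ)).prod := by
  rw [List.map_map]
  rfl

theorem e_mul_mul_e_self (i : ℕ) (x : ExteriorAlgebra ℂ (Fin N → ℂ)) : e N i * x * e N i = 0 :=
  ι_mul_mul_ι_self _ _

theorem commute_e_e_mul_e (k i j : ℕ) : Commute (e N k) (e N i * e N j) :=
  commute_ι_ι_mul_ι _ _ _

theorem e_mul_wedgeSeq_eq_zero {i a n : ℕ} (h₁ : a ≤ i) (h₂ : i < a + n) :
    e N i * wedgeSeq N a n = 0 := by
  rw [wedgeSeq_eq_prod_map_ι]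
  exact ι_mul_prod_map_ι_eq_zero (List.mem_map_of_mem (List.mem_range'_1.mpr ⟨h₁, h₂⟩))

theorem wedgeSeq_mul_eq_zero {i a n : ℕ} (h₁ : a ≤ i) (h₂ : i < a + n)
    {x : ExteriorAlgebra ℂ (Fin N → ℂ)} (hx : e N i * x = 0) : wedgeSeq N a n * x = 0 := by
  rw [wedgeSeq_eq_prod_map_ι]
  exact prod_map_ι_mul_eq_zero (List.mem_map_of_mem (List.mem_range'_1.mpr ⟨h₁, h₂⟩)) hx

theorem wedgeSeq_mul_e_eq_zero {i a n : ℕ} (h₁ : a ≤ i) (h₂ : i < a + n) :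
    wedgeSeq N a n * e N i = 0 :=
  wedgeSeq_mul_eq_zero h₁ h₂ (ι_sq_zero _)

theorem wedgeSeq_mul_self {n : ℕ} (a : ℕ) (hn : 0 < n) : wedgeSeq N a n * wedgeSeq N a n = 0 :=
  wedgeSeq_mul_eq_zero le_rfl (by omega) (e_mul_wedgeSeq_eq_zero le_rfl (by omega))

theorem commute_wedgeSeq_of_even {n : ℕ} (a : ℕ) (hn : Even n)
    (x : ExteriorAlgebra ℂ (Fin N → ℂ)) : Commute (wedgeSeq N a n) x := by
  rw [wedgeSeq_eq_prod_map_ι]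
  exact commute_prod_map_ι_of_even (by simpa using hn) x

theorem wedgeSeq_mul_wedgeSeq (a m n : ℕ) :
    wedgeSeq N a m * wedgeSeq N (a + m) n = wedgeSeq N a (m + n) := by
  rw [wedgeSeq, wedgeSeq, wedgeSeq, ← List.prod_append, ← List.map_append, List.range'_append_1]

theorem wedgeSeq_mul_e {a n i : ℕ} (h : a + n = i) :
    wedgeSeq N a n * e N i = wedgeSeq N a (n + 1) := by
  rw [← wedgeSeq_mul_wedgeSeq, h]
  simp [wedgeSeq]

theorem wedgeSeq_top_ne_zero : wedgeSeq N 1 N ≠ 0 := by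
  have h : wedgeSeq N 1 N = ιMulti ℂ N (Pi.basisFun ℂ (Fin N)) := by
    rw [ιMulti_apply, wedgeSeq]
    congr 1
    refine List.ext_getElem (by simp) fun k _ _ => ?_
    simp only [List.getElem_map, List.getElem_range', List.getElem_ofFn, Pi.basisFun_apply, e]
    congr 1
    funext j
    simp only [Pi.single_apply, Fin.ext_iff]
    congr 1
    simp only [eq_iff_iff]
    omega
  exact h ▸ ιMulti_basis_ne_zero _

theorem wedgeSeq_add_wedgeSeq_mul_self {m : ℕ} (a : ℕ) (hm : 0 < m) (he : Even m) :
    (wedgeSeq N a m + wedgeSeq N (a + m) m) * (wedgeSeq N a m + wedgeSeq N (a + m) m) =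
      (2 : ℂ) • wedgeSeq N a (m + m) := by
  rw [add_mul, mul_add, mul_add, wedgeSeq_mul_self _ hm, wedgeSeq_mul_self _ hm,
    ← (commute_wedgeSeq_of_even a he _).eq, wedgeSeq_mul_wedgeSeq, zero_add, add_zero, two_smul]

theorem wedgeSeq_mul_e_mul_eq_zero_of_mem_span {m k : ℕ} {σ : ExteriorAlgebra ℂ (Fin N → ℂ)}
    (hσ : σ ∈ Submodule.span ℂ {x | ∃ i j, 1 ≤ i ∧ i < j ∧ j ≤ m ∧ x = e N i * e N j}) :
    wedgeSeq N 1 m * e N k * σ = 0 := by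
  refine (Submodule.span_le (p := LinearMap.ker (LinearMap.mulLeft ℂ _))).mpr ?_ hσ
  rintro _ ⟨i, j, hi, hij, hj, rfl⟩
  rw [SetLike.mem_coe, LinearMap.mem_ker, LinearMap.mulLeft_apply, mul_assoc,
    (commute_e_e_mul_e k i j).eq, ← mul_assoc, ← mul_assoc, wedgeSeq_mul_e_eq_zero hi (by omega),
    zero_mul, zero_mul]

end StandardBasis

theorem stmt_1_general (l : ℕ) (hl : 1 ≤ l)
    (z : ExteriorAlgebra ℂ (Fin (4 * l + 3) → ℂ))
    (σ : ExteriorAlgebra ℂ (Fin (4 * l + 3) → ℂ))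
    (hσ : σ ∈ Submodule.span ℂ
      {x | ∃ i j, 1 ≤ i ∧ i < j ∧ j ≤ 4 * l ∧ x = e (4 * l + 3) i * e (4 * l + 3) j}) :
    ((wedgeSeq (4 * l + 3) 1 (2 * l) + wedgeSeq (4 * l + 3) (2 * l + 1) (2 * l)) *
        e (4 * l + 3) (4 * l + 3)) *
      (z * e (4 * l + 3) (4 * l + 3) +
        (wedgeSeq (4 * l + 3) 1 (2 * l) + wedgeSeq (4 * l + 3) (2 * l + 1) (2 * l)) *
          (e (4 * l + 3) (4 * l + 1) * e (4 * l + 3) (4 * l + 2) + σ)) =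
      (2 : ℂ) • wedgeSeq (4 * l + 3) 1 (4 * l + 3) ∧
    ((wedgeSeq (4 * l + 3) 1 (2 * l) + wedgeSeq (4 * l + 3) (2 * l + 1) (2 * l)) *
        e (4 * l + 3) (4 * l + 3)) *
      (z * e (4 * l + 3) (4 * l + 3) +
        (wedgeSeq (4 * l + 3) 1 (2 * l) + wedgeSeq (4 * l + 3) (2 * l + 1) (2 * l)) *
          (e (4 * l + 3) (4 * l + 1) * e (4 * l + 3) (4 * l + 2) + σ)) ≠ 0 := by
  set Ω := wedgeSeq (4 * l + 3) 1 (2 * l) + wedgeSeq (4 * l + 3) (2 * l + 1) (2 * l) with hΩ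
  set E := e (4 * l + 3) (4 * l + 3)
  have hΩΩ : Ω * Ω = (2 : ℂ) • wedgeSeq (4 * l + 3) 1 (4 * l) := by
    rw [hΩ, show 2 * l + 1 = 1 + 2 * l by omega,
      wedgeSeq_add_wedgeSeq_mul_self _ (by omega) (even_two_mul l),
      show 2 * l + 2 * l = 4 * l by omega]
  have hEΩ : Commute E Ω :=
    ((commute_wedgeSeq_of_even _ (even_two_mul l) E).add_left
      (commute_wedgeSeq_of_even _ (even_two_mul l) E)).symm
  have hzE : Ω * E * (z * E) = 0 := by
    rw [mul_assoc, ← mul_assoc E, e_mul_mul_e_self, mul_zero]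
  have hΩτ : ∀ τ, Ω * E * (Ω * τ) = Ω * Ω * E * τ := fun τ => by
    rw [← mul_assoc, mul_assoc Ω E Ω, hEΩ.eq, ← mul_assoc]
  have hpair : wedgeSeq (4 * l + 3) 1 (4 * l) * E *
      (e (4 * l + 3) (4 * l + 1) * e (4 * l + 3) (4 * l + 2)) =
        wedgeSeq (4 * l + 3) 1 (4 * l + 3) := by
    rw [mul_assoc, (commute_e_e_mul_e _ _ _).eq, ← mul_assoc, ← mul_assoc,
      wedgeSeq_mul_e (by omega), wedgeSeq_mul_e (by omega), wedgeSeq_mul_e (by omega)]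
  have hprod : Ω * E * (z * E + Ω * (e (4 * l + 3) (4 * l + 1) * e (4 * l + 3) (4 * l + 2) + σ)) =
      (2 : ℂ) • wedgeSeq (4 * l + 3) 1 (4 * l + 3) := by
    rw [mul_add, hzE, zero_add, hΩτ, hΩΩ, smul_mul_assoc, smul_mul_assoc, mul_add, hpair,
      wedgeSeq_mul_e_mul_eq_zero_of_mem_span hσ, add_zero]
  exact ⟨hprod, hprod ▸ smul_ne_zero two_ne_zero wedgeSeq_top_ne_zero⟩

/-- with `N = 4l+3` and `Ω := e_1∧…∧e_{2l} + e_{2l+1}∧…∧e_{4l}` in `Λ(ℂ^N)`,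
for every `z` in the subalgebra generated by `e_1,…,e_{4l}` and every `σ` in the linear span
of `{e_i∧e_j : 1 ≤ i < j ≤ 4l}`, one has
`(Ω∧e_{4l+3}) ∧ (z∧e_{4l+3} + Ω∧(e_{4l+1}∧e_{4l+2} + σ)) = 2·e_1∧…∧e_{4l+3} ≠ 0`. -/
theorem stmt_1 (l : ℕ) (hl : 1 ≤ l)
    (z : ExteriorAlgebra ℂ (Fin (4 * l + 3) → ℂ))
    (hz : z ∈ Algebra.adjoin ℂ {x | ∃ i, 1 ≤ i ∧ i ≤ 4 * l ∧ x = e (4 * l + 3) i})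
    (σ : ExteriorAlgebra ℂ (Fin (4 * l + 3) → ℂ))
    (hσ : σ ∈ Submodule.span ℂ
      {x | ∃ i j, 1 ≤ i ∧ i < j ∧ j ≤ 4 * l ∧ x = e (4 * l + 3) i * e (4 * l + 3) j}) :
    ((wedgeSeq (4 * l + 3) 1 (2 * l) + wedgeSeq (4 * l + 3) (2 * l + 1) (2 * l)) *
        e (4 * l + 3) (4 * l + 3)) *
      (z * e (4 * l + 3) (4 * l + 3) +
        (wedgeSeq (4 * l + 3) 1 (2 * l) + wedgeSeq (4 * l + 3) (2 * l + 1) (2 * l)) *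
          (e (4 * l + 3) (4 * l + 1) * e (4 * l + 3) (4 * l + 2) + σ)) =
      (2 : ℂ) • wedgeSeq (4 * l + 3) 1 (4 * l + 3) ∧
    ((wedgeSeq (4 * l + 3) 1 (2 * l) + wedgeSeq (4 * l + 3) (2 * l + 1) (2 * l)) *
        e (4 * l + 3) (4 * l + 3)) *
      (z * e (4 * l + 3) (4 * l + 3) +
        (wedgeSeq (4 * l + 3) 1 (2 * l) + wedgeSeq (4 * l + 3) (2 * l + 1) (2 * l)) *
          (e (4 * l + 3) (4 * l + 1) * e (4 * l + 3) (4 * l + 2) + σ)) ≠ 0 :=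
  stmt_1_general l hl z σ hσ
end

section
/- Work in Λ(ℂ^7). Let a_{ui} ∈ ℂ be given for all 3 ≤ u ≤ i ≤ 7. Define the 1-forms γ_u := Σ_{i=u}^{7} a_{ui}·e_i and the 2-forms δ_u := Σ_{i=u}^{7} a_{ui}·(e_{i−1}∧e_1) for u = 3, …, 7, and set Q := γ_4∧γ_5 + γ_5∧γ_6 + γ_6∧γ_7 and ∂Q := δ_4∧γ_5 − γ_4∧δ_5 + δ_5∧γ_6 − γ_5∧δ_6 + δ_6∧γ_7 − γ_6∧δ_7. Then (γ_3∧Q) ∧ (δ_3∧Q − γ_3∧∂Q) = −2·a_{33}·(a_{33}·a_{44}·a_{55}·a_{66}·a_{77})·e_1∧e_2∧e_3∧e_4∧e_5∧e_6∧e_7. In particular, if a_{33}, a_{44}, a_{55}, a_{66}, a_{77} are all nonzero, this product is nonzero. -/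
/-- The 1-form `γ_u := Σ_{i=u}^{7} a_{ui}·e_i` in `Λ(ℂ^7)`. -/
noncomputable def γform (a : ℕ → ℕ → ℂ) (u : ℕ) : ExteriorAlgebra ℂ (Fin 7 → ℂ) :=
  ∑ i ∈ Finset.Icc u 7, a u i • e 7 i

/-- The 2-form `δ_u := Σ_{i=u}^{7} a_{ui}·(e_{i−1}∧e_1)` in `Λ(ℂ^7)`. -/
noncomputable def δform (a : ℕ → ℕ → ℂ) (u : ℕ) : ExteriorAlgebra ℂ (Fin 7 → ℂ) :=
  ∑ i ∈ Finset.Icc u 7, a u i • (e 7 (i - 1) * e 7 1)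

/-- `Q := γ_4∧γ_5 + γ_5∧γ_6 + γ_6∧γ_7`. -/
noncomputable def Qform (a : ℕ → ℕ → ℂ) : ExteriorAlgebra ℂ (Fin 7 → ℂ) :=
  γform a 4 * γform a 5 + γform a 5 * γform a 6 + γform a 6 * γform a 7

/-- `∂Q := δ_4∧γ_5 − γ_4∧δ_5 + δ_5∧γ_6 − γ_5∧δ_6 + δ_6∧γ_7 − γ_6∧δ_7`. -/
noncomputable def dQform (a : ℕ → ℕ → ℂ) : ExteriorAlgebra ℂ (Fin 7 → ℂ) :=
  δform a 4 * γform a 5 - γform a 4 * δform a 5 + δform a 5 * γform a 6 -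
    γform a 5 * δform a 6 + δform a 6 * γform a 7 - γform a 6 * δform a 7

/-!
`Q` and `δ₃` are sums of products of two vectors, hence central in the exterior algebra.
So `γ₃Q ∧ γ₃∂Q` contains `γ₃ ∧ γ₃ = 0`, while `γ₃Q ∧ δ₃Q = δ₃ ∧ γ₃ ∧ Q²` with
`Q² = 2 γ₄γ₅γ₆γ₇`, every other cross term repeating a factor. The `γ_u` are upper triangular in
the `e_i`, so `γ₃ ∧ … ∧ γ₇ = (∏ a_uu) e₃ ∧ … ∧ e₇`, and against this only the term `a₃₃ e₂ ∧ e₁`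
of `δ₃` survives, giving `-a₃₃ e₁ ∧ … ∧ e₇`. This last wedge is nonzero because wedges of
linearly independent vectors are.
-/

namespace ExteriorAlgebra

variable {R M : Type*} [CommRing R] [AddCommGroup M] [Module R M]

theorem ι_mul_ι_swap (x y : M) : ι R y * ι R x = -(ι R x * ι R y) :=
  eq_neg_of_add_eq_zero_left (ι_add_mul_swap y x)

theorem mul_self_eq_zero_of_mem_range_ι {x : ExteriorAlgebra R M}
    (hx : x ∈ LinearMap.range (ι R)) : x * x = 0 := by
  obtain ⟨u, rfl⟩ := hx
  exact ι_sq_zero u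

-- Moving a generator past a product of two vectors costs two sign changes.
theorem commute_mul_of_mem_range_ι {x y : ExteriorAlgebra R M}
    (hx : x ∈ LinearMap.range (ι R)) (hy : y ∈ LinearMap.range (ι R))
    (b : ExteriorAlgebra R M) : Commute (x * y) b := by
  obtain ⟨u, rfl⟩ := hx
  obtain ⟨v, rfl⟩ := hy
  induction b using ExteriorAlgebra.induction with
  | algebraMap r => exact Algebra.commute_algebraMap_right r _
  | ι w =>
    change ι R u * ι R v * ι R w = ι R w * (ι R u * ι R v)
    rw [mul_assoc, ι_mul_ι_swap w v, mul_neg, ← mul_assoc, ι_mul_ι_swap w u, neg_mul, neg_neg,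
      mul_assoc]
  | mul _ _ ha hb => exact ha.mul_right hb
  | add _ _ ha hb => exact ha.add_right hb

theorem chain_mul_self {p q r s : ExteriorAlgebra R M} (hp : p ∈ LinearMap.range (ι R))
    (hq : q ∈ LinearMap.range (ι R)) (hr : r ∈ LinearMap.range (ι R))
    (hs : s ∈ LinearMap.range (ι R)) :
    (p * q + q * r + r * s) * (p * q + q * r + r * s) = (2 : R) • (p * q * (r * s)) := by
  have pair_sq : ∀ {x y : ExteriorAlgebra R M}, x ∈ LinearMap.range (ι R) →
      y ∈ LinearMap.range (ι R) → x * y * (x * y) = 0 := fun hx hy => by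
    rw [← mul_assoc, (commute_mul_of_mem_range_ι hx hy _).eq, ← mul_assoc,
      mul_self_eq_zero_of_mem_range_ι hx, zero_mul, zero_mul]
  have overlap : ∀ {x y z : ExteriorAlgebra R M}, y ∈ LinearMap.range (ι R) →
      x * y * (y * z) = 0 := fun {x y z} hy => by
    rw [mul_assoc, ← mul_assoc y, mul_self_eq_zero_of_mem_range_ι hy, zero_mul, mul_zero]
  simp only [add_mul, mul_add]
  rw [(commute_mul_of_mem_range_ι hq hr _).eq, (commute_mul_of_mem_range_ι hr hs (p * q)).eq,
    (commute_mul_of_mem_range_ι hr hs (q * r)).eq, pair_sq hp hq, pair_sq hq hr, pair_sq hr hs,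
    overlap hq, overlap hr, two_smul]
  abel

end ExteriorAlgebra

open ExteriorAlgebra

theorem e_succ_eq_ι_single (N : ℕ) (i : Fin N) : e N (i + 1) = ι ℂ (Pi.single i 1) := by
  rw [e]
  congr 1
  ext k
  simp [Pi.single_apply, Fin.val_inj]

theorem e_mem_range_ι (N i : ℕ) : e N i ∈ LinearMap.range (ι ℂ) :=
  LinearMap.mem_range_self _ _

theorem e_mul_e_swap (N i j : ℕ) : e N j * e N i = -(e N i * e N j) :=
  ι_mul_ι_swap _ _

theorem wedgeSeq_zero (N a : ℕ) : wedgeSeq N a 0 = 1 := rfl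

theorem e_mul_wedgeSeq (N a n : ℕ) : e N a * wedgeSeq N (a + 1) n = wedgeSeq N a (n + 1) := rfl

theorem e_mul_wedgeSeq_of_mem {N a n i : ℕ} (h₁ : a ≤ i) (h₂ : i < a + n) :
    e N i * wedgeSeq N a n = 0 := by
  induction n generalizing a with
  | zero => omega
  | succ n ih =>
    rw [← e_mul_wedgeSeq, ← mul_assoc]
    rcases h₁.eq_or_lt with rfl | h
    · rw [show e N a * e N a = 0 from ι_sq_zero _, zero_mul]
    · rw [e_mul_e_swap, neg_mul, mul_assoc, ih h (by omega), mul_zero, neg_zero]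

theorem wedgeSeq_one_eq_ιMulti (N : ℕ) :
    wedgeSeq N 1 N = ιMulti ℂ N (Pi.basisFun ℂ (Fin N)) := by
  rw [wedgeSeq, ιMulti_apply]
  congr 1
  refine List.ext_get (by simp) fun n _ hn => ?_
  simpa [add_comm] using e_succ_eq_ι_single N ⟨n, by simpa using hn⟩

theorem ιMulti_ne_zero_of_linearIndependent {K E : Type*} [Field K] [AddCommGroup E]
    [Module K E] {n : ℕ} {v : Fin n → E} (hv : LinearIndependent K v) : ιMulti K n v ≠ 0 := by
  have h := (exteriorPower.ιMulti_family_linearIndependent_field n hv).ne_zero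
    (Set.powersetCard.ofFinEmbEquiv (OrderIso.refl (Fin n)).toOrderEmbedding)
  rwa [Ne, ← Submodule.coe_eq_zero, exteriorPower.ιMulti_family_apply_coe, ιMulti_family,
    Equiv.symm_apply_apply] at h

theorem wedgeSeq_one_ne_zero (N : ℕ) : wedgeSeq N 1 N ≠ 0 :=
  wedgeSeq_one_eq_ιMulti N ▸
    ιMulti_ne_zero_of_linearIndependent (Pi.basisFun ℂ (Fin N)).linearIndependent

section Forms

variable (a : ℕ → ℕ → ℂ)

theorem γform_mem_range_ι (u : ℕ) : γform a u ∈ LinearMap.range (ι ℂ) :=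
  Submodule.sum_mem _ fun i _ => Submodule.smul_mem _ _ (e_mem_range_ι 7 i)

theorem commute_Qform (b : ExteriorAlgebra ℂ (Fin 7 → ℂ)) : Commute (Qform a) b :=
  ((commute_mul_of_mem_range_ι (γform_mem_range_ι a 4) (γform_mem_range_ι a 5) b).add_left
    (commute_mul_of_mem_range_ι (γform_mem_range_ι a 5) (γform_mem_range_ι a 6) b)).add_left
    (commute_mul_of_mem_range_ι (γform_mem_range_ι a 6) (γform_mem_range_ι a 7) b)

theorem commute_δform (u : ℕ) (b : ExteriorAlgebra ℂ (Fin 7 → ℂ)) : Commute (δform a u) b :=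
  Commute.sum_left _ _ _ fun i _ =>
    (commute_mul_of_mem_range_ι (e_mem_range_ι 7 (i - 1)) (e_mem_range_ι 7 1) b).smul_left _

theorem Qform_mul_self :
    Qform a * Qform a = (2 : ℂ) • (γform a 4 * γform a 5 * (γform a 6 * γform a 7)) :=
  chain_mul_self (γform_mem_range_ι a 4) (γform_mem_range_ι a 5) (γform_mem_range_ι a 6)
    (γform_mem_range_ι a 7)

/-- `γ_u = a_{uu} e_u + (terms in e_i, i > u)`, and each `e_i` with `i > u` is already a factor
of `e_{u+1} ∧ … ∧ e_7`. -/
theorem γform_mul_wedgeSeq {u n : ℕ} (h : u + n = 7) :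
    γform a u * wedgeSeq 7 (u + 1) n = a u u • wedgeSeq 7 u (n + 1) := by
  rw [γform, Finset.Icc_eq_cons_Ioc (by omega), Finset.sum_cons, add_mul, Finset.sum_mul,
    Finset.sum_eq_zero fun i hi => ?_, add_zero, smul_mul_assoc, e_mul_wedgeSeq]
  rw [Finset.mem_Ioc] at hi
  rw [smul_mul_assoc, e_mul_wedgeSeq_of_mem (by omega) (by omega), smul_zero]

theorem γform_prod_eq_smul_wedgeSeq :
    γform a 3 * (γform a 4 * γform a 5 * (γform a 6 * γform a 7)) =
      (a 3 3 * a 4 4 * a 5 5 * a 6 6 * a 7 7) • wedgeSeq 7 3 5 := by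
  have h7 : γform a 7 = a 7 7 • wedgeSeq 7 7 1 := by
    simpa [wedgeSeq_zero] using γform_mul_wedgeSeq a (u := 7) (n := 0) rfl
  have h6 : γform a 6 * wedgeSeq 7 7 1 = a 6 6 • wedgeSeq 7 6 2 := γform_mul_wedgeSeq a rfl
  have h5 : γform a 5 * wedgeSeq 7 6 2 = a 5 5 • wedgeSeq 7 5 3 := γform_mul_wedgeSeq a rfl
  have h4 : γform a 4 * wedgeSeq 7 5 3 = a 4 4 • wedgeSeq 7 4 4 := γform_mul_wedgeSeq a rfl
  have h3 : γform a 3 * wedgeSeq 7 4 4 = a 3 3 • wedgeSeq 7 3 5 := γform_mul_wedgeSeq a rfl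
  rw [mul_assoc, h7]
  simp only [mul_smul_comm, h6, h5, h4, h3, smul_smul]
  ring_nf

/-- Only the `i = 3` term `a₃₃ e₂ ∧ e₁` of `δ₃` survives against `e₃ ∧ … ∧ e₇`. -/
theorem δform_three_mul_wedgeSeq :
    δform a 3 * wedgeSeq 7 3 5 = -(a 3 3 • wedgeSeq 7 1 7) := by
  rw [δform, Finset.Icc_eq_cons_Ioc (by omega), Finset.sum_cons, add_mul, Finset.sum_mul,
    Finset.sum_eq_zero fun i hi => ?_, add_zero, smul_mul_assoc]
  · rw [show 3 - 1 = 2 from rfl, e_mul_e_swap, neg_mul, mul_assoc,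
      (e_mul_wedgeSeq 7 2 5 : e 7 2 * wedgeSeq 7 3 5 = wedgeSeq 7 2 6), e_mul_wedgeSeq, smul_neg]
  · rw [Finset.mem_Ioc] at hi
    rw [smul_mul_assoc, e_mul_e_swap, neg_mul, mul_assoc,
      e_mul_wedgeSeq_of_mem (by omega) (by omega), mul_zero, neg_zero, smul_zero]

theorem γform_mul_Qform_mul_eq_smul_wedgeSeq :
    (γform a 3 * Qform a) * (δform a 3 * Qform a - γform a 3 * dQform a) =
      (-2 * a 3 3 * (a 3 3 * a 4 4 * a 5 5 * a 6 6 * a 7 7)) • wedgeSeq 7 1 7 := by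
  have hγγ : γform a 3 * Qform a * (γform a 3 * dQform a) = 0 := by
    rw [mul_assoc, ← mul_assoc (Qform a), (commute_Qform a _).eq, mul_assoc, ← mul_assoc,
      mul_self_eq_zero_of_mem_range_ι (γform_mem_range_ι a 3), zero_mul]
  calc (γform a 3 * Qform a) * (δform a 3 * Qform a - γform a 3 * dQform a)
      = δform a 3 * (γform a 3 * (Qform a * Qform a)) := by
        rw [mul_sub, hγγ, sub_zero, ← mul_assoc, ← (commute_δform a 3 _).eq, mul_assoc,
          mul_assoc]
    _ = (2 * (a 3 3 * a 4 4 * a 5 5 * a 6 6 * a 7 7)) • (δform a 3 * wedgeSeq 7 3 5) := by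
        rw [Qform_mul_self, mul_smul_comm, γform_prod_eq_smul_wedgeSeq, smul_smul, mul_smul_comm]
    _ = _ := by
        rw [δform_three_mul_wedgeSeq, smul_neg, smul_smul, ← neg_smul]
        ring_nf

end Forms

/-- in `Λ(ℂ^7)`,
`(γ_3∧Q) ∧ (δ_3∧Q − γ_3∧∂Q) = −2·a_{33}·(a_{33}a_{44}a_{55}a_{66}a_{77})·e_1∧…∧e_7`;
in particular this product is nonzero when the diagonal entries are all nonzero. -/
theorem stmt_3 (a : ℕ → ℕ → ℂ) :
    (γform a 3 * Qform a) * (δform a 3 * Qform a - γform a 3 * dQform a) =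
      (-2 * a 3 3 * (a 3 3 * a 4 4 * a 5 5 * a 6 6 * a 7 7)) • wedgeSeq 7 1 7 ∧
    ((a 3 3 ≠ 0 ∧ a 4 4 ≠ 0 ∧ a 5 5 ≠ 0 ∧ a 6 6 ≠ 0 ∧ a 7 7 ≠ 0) →
      (γform a 3 * Qform a) * (δform a 3 * Qform a - γform a 3 * dQform a) ≠ 0) := by
  refine ⟨γform_mul_Qform_mul_eq_smul_wedgeSeq a, fun ⟨h3, h4, h5, h6, h7⟩ => ?_⟩
  rw [γform_mul_Qform_mul_eq_smul_wedgeSeq a]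
  exact smul_ne_zero (by simp [h3, h4, h5, h6, h7]) (wedgeSeq_one_ne_zero 7)
end
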